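/- arXiv:0910.4613 — 3 statements merged into one kernel-verified Lean document; each statement's English description precedes it below -/
import Mathlib

section
/- Let ν > 0, λ₁ > 0, β > 0, and t₁(s) = 1/(2·ln 2·(ν+s)) − λ₁/(1+β). The function t₁ is strictly decreasing on [0,∞) and has unique root s₁ = (1+β)/(2·λ₁·ln 2) − ν whenever s₁ ≥ 0; consequently, the map a ↦ ∫₀^{a(1+β)²} t₁(s) ds over a ≥ 0 is maximized at a* = (1/(1+β)²)·max(s₁, 0). -/
/-!
`t₁ s = 1/(c (ν + s)) - k` with `c = 2 ln 2`, `k = λ₁/(1+β)` is strictly decreasing on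
`(-ν, ∞)` and vanishes at `s₁ = 1/(c k) - ν > -ν`. Hence on `[0, ∞)` it is nonnegative up to
`max s₁ 0` and nonpositive afterwards, so its primitive from `0` peaks at `max s₁ 0`.
-/

open Set MeasureTheory intervalIntegral

theorem isMaxOn_intervalIntegral_of_sign_change {f : ℝ → ℝ} {a m : ℝ} (ham : a ≤ m)
    (hf : ∀ b, a ≤ b → IntervalIntegrable f volume a b)
    (hpos : ∀ u ∈ Ioc a m, 0 ≤ f u) (hneg : ∀ u ∈ Ioi m, f u ≤ 0) :
    IsMaxOn (fun x => ∫ t in a..x, f t) (Ici a) m := by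
  refine isMaxOn_iff.2 fun x hx => ?_
  have hsplit : (∫ t in a..m, f t) - ∫ t in a..x, f t = ∫ t in x..m, f t :=
    integral_interval_sub_left (hf m ham) (hf x hx)
  suffices 0 ≤ ∫ t in x..m, f t by linarith
  rcases le_total x m with hxm | hmx
  · rw [integral_of_le hxm]
    exact setIntegral_nonneg measurableSet_Ioc fun u hu =>
      hpos u ⟨(mem_Ici.1 hx).trans_lt hu.1, hu.2⟩
  · rw [integral_symm, integral_of_le hmx, neg_nonneg]
    exact setIntegral_nonpos measurableSet_Ioc fun u hu => hneg u hu.1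

theorem strictAntiOn_one_div_mul_add_sub {c ν k : ℝ} (hc : 0 < c) :
    StrictAntiOn (fun s => 1 / (c * (ν + s)) - k) (Ioi (-ν)) := by
  intro x hx y _ hxy
  have hx' : 0 < ν + x := by linarith [mem_Ioi.1 hx]
  have : 1 / (c * (ν + y)) < 1 / (c * (ν + x)) :=
    one_div_lt_one_div_of_lt (by positivity) (by gcongr)
  simp only
  linarith

theorem one_div_mul_add_sub_eq_zero {c ν k : ℝ} (hc : c ≠ 0) (hk : k ≠ 0) :
    1 / (c * (ν + (1 / (c * k) - ν))) - k = 0 := by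
  field_simp
  ring

/-- `t₁` is strictly decreasing on `[0,∞)`, has unique root
`s₁ = (1+β)/(2 λ₁ ln 2) − ν` whenever `s₁ ≥ 0`, and the map
`a ↦ ∫₀^{a(1+β)²} t₁(s) ds` over `a ≥ 0` is maximized at
`a* = (1/(1+β)²) max(s₁,0)`. -/
theorem stmt_2 (ν l1 β : ℝ) (hν : 0 < ν) (hl1 : 0 < l1) (hβ : 0 < β)
    (t1 : ℝ → ℝ)
    (ht1 : ∀ s, t1 s = 1 / (2 * Real.log 2 * (ν + s)) - l1 / (1 + β))
    (s1 : ℝ) (hs1 : s1 = (1 + β) / (2 * l1 * Real.log 2) - ν) :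
    StrictAntiOn t1 (Set.Ici 0) ∧
    (0 ≤ s1 → t1 s1 = 0 ∧ ∀ s ∈ Set.Ici (0 : ℝ), t1 s = 0 → s = s1) ∧
    (∀ a : ℝ, 0 ≤ a →
      (∫ s in (0 : ℝ)..(a * (1 + β) ^ 2), t1 s)
        ≤ ∫ s in (0 : ℝ)..((1 / (1 + β) ^ 2 * max s1 0) * (1 + β) ^ 2), t1 s) := by
  have hlog : 0 < Real.log 2 := Real.log_pos one_lt_two
  have hk : 0 < l1 / (1 + β) := by positivity
  have ht : t1 = fun s => 1 / (2 * Real.log 2 * (ν + s)) - l1 / (1 + β) := funext ht1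
  have hs1' : s1 = 1 / (2 * Real.log 2 * (l1 / (1 + β))) - ν := by
    rw [hs1]; field_simp
  have hanti : StrictAntiOn t1 (Ioi (-ν)) :=
    ht ▸ strictAntiOn_one_div_mul_add_sub (by positivity)
  have hroot : t1 s1 = 0 := by
    rw [ht, hs1']; exact one_div_mul_add_sub_eq_zero (by positivity) hk.ne'
  have hs1ν : s1 ∈ Ioi (-ν) := by
    have : 0 < 1 / (2 * Real.log 2 * (l1 / (1 + β))) := by positivity
    rw [mem_Ioi, hs1']; linarith
  have hIci : Ici (0 : ℝ) ⊆ Ioi (-ν) := fun u hu => (neg_neg_of_pos hν).trans_le hu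
  have hsign : ∀ u ∈ Ioi (-ν), 0 ≤ t1 u ↔ u ≤ s1 := fun u hu => by
    rw [← hroot]; exact hanti.le_iff_ge hs1ν hu
  refine ⟨hanti.mono hIci, fun _ => ⟨hroot, fun s hs h => hanti.injOn (hIci hs) hs1ν
    (h.trans hroot.symm)⟩, fun a ha => ?_⟩
  have hm : 1 / (1 + β) ^ 2 * max s1 0 * (1 + β) ^ 2 = max s1 0 := by field_simp
  rw [hm]
  refine isMaxOn_intervalIntegral_of_sign_change (le_max_right _ _)
    (fun b hb => (hanti.antitoneOn.mono ?_).intervalIntegrable) ?_ ?_ (mem_Ici.2 (by positivity))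
  · rw [uIcc_of_le hb]; exact Icc_subset_Ici_self.trans hIci
  · intro u ⟨hu0, hum⟩
    exact (hsign u (hIci hu0.le)).2 ((le_max_iff.1 hum).resolve_right hu0.not_ge)
  · intro u hu
    by_contra! h
    exact ((hsign u (hIci (mem_Ici.2 ((le_max_right _ _).trans hu.le)))).1 h.le).not_gt
      ((le_max_left _ _).trans_lt hu)
end

section
/- Let 0 < ν < μ, γ₁ > 0, λ₁ > 0, and define t₂(s) = (γ₁/(2·ln 2))·(1/(ν+s) − 1/(μ+s)) − λ₁ for s ≥ 0. Then t₂ is strictly decreasing on [0,∞), and if t₂(0) ≥ 0 its unique nonnegative root is s₂ = (1/2)·(√((μ−ν)·(μ−ν + 2γ₁/(λ₁·ln 2))) − (μ+ν)). -/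
/-!
On `s > -ν` we have `1/(ν+s) - 1/(μ+s) = (μ-ν)/((ν+s)(μ+s))`, a positive constant over an
increasing positive product, so `t₂` is strictly decreasing. Hence `t₂ s = 0` reads
`(ν+s)(μ+s) = K` with `K = γ₁(μ-ν)/(2 λ₁ ln 2)`, a quadratic in `s` whose larger root is `s₂`;
`t₂ 0 ≥ 0` says `νμ ≤ K`, which makes that root nonnegative.
-/

open Set

theorem one_div_add_sub_one_div_add {a b s : ℝ} (ha : a + s ≠ 0) (hb : b + s ≠ 0) :
    1 / (a + s) - 1 / (b + s) = (b - a) / ((a + s) * (b + s)) := by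
  field_simp
  ring

theorem strictAntiOn_one_div_add_sub_one_div_add {a b : ℝ} (hab : a < b) :
    StrictAntiOn (fun s => 1 / (a + s) - 1 / (b + s)) (Ioi (-a)) := by
  intro s hs t ht hst
  simp only [mem_Ioi] at hs ht ⊢
  have has : 0 < a + s := by linarith
  have hat : 0 < a + t := by linarith
  rw [one_div_add_sub_one_div_add has.ne' (by linarith),
    one_div_add_sub_one_div_add hat.ne' (by linarith)]
  have hprod : (a + s) * (b + s) < (a + t) * (b + t) :=
    mul_lt_mul'' (by linarith) (by linarith) has.le (by linarith)
  exact div_lt_div_of_pos_left (by linarith) (by nlinarith) hprod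

theorem add_mul_add_eq_of_eq_sqrt {a b K r : ℝ} (hD : 0 ≤ (b - a) ^ 2 + 4 * K)
    (hr : r = (√((b - a) ^ 2 + 4 * K) - (a + b)) / 2) : (a + r) * (b + r) = K := by
  subst hr
  linear_combination Real.sq_sqrt hD / 4

theorem sqrt_sub_div_two_nonneg {a b K : ℝ} (hK : a * b ≤ K) :
    0 ≤ (√((b - a) ^ 2 + 4 * K) - (a + b)) / 2 := by
  have : a + b ≤ √((b - a) ^ 2 + 4 * K) := Real.le_sqrt_of_sq_le (by nlinarith)
  linarith

section ReciprocalGap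

variable {c a b l : ℝ}

theorem strictAntiOn_mul_one_div_add_sub_one_div_add_sub (hc : 0 < c) (hab : a < b) :
    StrictAntiOn (fun s => c * (1 / (a + s) - 1 / (b + s)) - l) (Ioi (-a)) := fun _ hs _ ht hst =>
  sub_lt_sub_right (mul_lt_mul_of_pos_left
    (strictAntiOn_one_div_add_sub_one_div_add hab hs ht hst) hc) l

theorem mul_le_div_of_mul_one_div_sub_one_div_sub_nonneg (ha : 0 < a) (hab : a < b) (hl : 0 < l)
    (h : 0 ≤ c * (1 / a - 1 / b) - l) : a * b ≤ c * (b - a) / l := by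
  have hab_pos : 0 < a * b := by nlinarith
  rw [← add_zero a, ← add_zero b, one_div_add_sub_one_div_add (by linarith) (by linarith),
    add_zero, add_zero, ← mul_div_assoc] at h
  have : l * (a * b) ≤ c * (b - a) := (le_div_iff₀ hab_pos).mp (by linarith)
  rw [le_div_iff₀ hl]
  linarith

theorem mul_one_div_add_sub_one_div_add_sub_eq_zero {s : ℝ} (hc : c ≠ 0) (hab : a ≠ b)
    (ha : a + s ≠ 0) (hb : b + s ≠ 0) (h : (a + s) * (b + s) = c * (b - a) / l) :
    c * (1 / (a + s) - 1 / (b + s)) - l = 0 := by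
  have : b - a ≠ 0 := sub_ne_zero.mpr hab.symm
  rw [one_div_add_sub_one_div_add ha hb, h]
  field_simp
  ring

end ReciprocalGap

/-- `t₂` is strictly decreasing on `[0,∞)` and, if `t₂(0) ≥ 0`, its unique
nonnegative root is `s₂ = (1/2)(√((μ−ν)(μ−ν+2γ₁/(λ₁ ln 2))) − (μ+ν))`. -/
theorem stmt_3 (ν μ γ1 l1 : ℝ) (hν : 0 < ν) (hμ : ν < μ) (hγ : 0 < γ1)
    (hl1 : 0 < l1) (t2 : ℝ → ℝ)
    (ht2 : ∀ s, t2 s = γ1 / (2 * Real.log 2) * (1 / (ν + s) - 1 / (μ + s)) - l1)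
    (s2 : ℝ)
    (hs2 : s2 = (1 / 2) * (Real.sqrt ((μ - ν) * (μ - ν + 2 * γ1 / (l1 * Real.log 2)))
        - (μ + ν))) :
    StrictAntiOn t2 (Set.Ici 0) ∧
    (0 ≤ t2 0 → 0 ≤ s2 ∧ t2 s2 = 0 ∧ ∀ s ∈ Set.Ici (0 : ℝ), t2 s = 0 → s = s2) := by
  have hL : 0 < Real.log 2 := Real.log_pos one_lt_two
  set c := γ1 / (2 * Real.log 2) with hc_def
  have hc : 0 < c := by positivity
  obtain rfl : t2 = fun s => c * (1 / (ν + s) - 1 / (μ + s)) - l1 := funext ht2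
  have hanti : StrictAntiOn (fun s => c * (1 / (ν + s) - 1 / (μ + s)) - l1) (Ici 0) :=
    (strictAntiOn_mul_one_div_add_sub_one_div_add_sub hc hμ).mono
      fun x (hx : 0 ≤ x) => show -ν < x by linarith
  refine ⟨hanti, fun h0 => ?_⟩
  have hνμ := mul_le_div_of_mul_one_div_sub_one_div_sub_nonneg hν hμ hl1 (by simpa using h0)
  have hs2' : s2 = (√((μ - ν) ^ 2 + 4 * (c * (μ - ν) / l1)) - (ν + μ)) / 2 := by
    have hD : (μ - ν) * (μ - ν + 2 * γ1 / (l1 * Real.log 2))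
        = (μ - ν) ^ 2 + 4 * (c * (μ - ν) / l1) := by
      rw [hc_def]
      field_simp
      ring
    rw [hs2, hD]
    ring
  have hs2_nonneg : 0 ≤ s2 := hs2' ▸ sqrt_sub_div_two_nonneg hνμ
  have hroot := mul_one_div_add_sub_one_div_add_sub_eq_zero hc.ne' hμ.ne
    (by linarith) (by linarith) (add_mul_add_eq_of_eq_sqrt (by nlinarith) hs2')
  exact ⟨hs2_nonneg, hroot, fun s hs hts => hanti.injOn hs hs2_nonneg (hts.trans hroot.symm)⟩
end

section
/- Let 0 < ν < μ, γ₁ > 0, λ₁ > 0, and define F(b) = (γ₁/2)·log₂(1+b/ν) − (γ₁/2)·log₂(1+b/μ) − λ₁·b for b ≥ 0. Then F(b) = ∫₀^b t₂(s) ds with t₂(s) = (γ₁/(2 ln 2))·(1/(ν+s) − 1/(μ+s)) − λ₁, F is concave on [0,∞), and F is maximized at b* = max(s₂, 0) where s₂ = (1/2)·(√((μ−ν)(μ−ν + 2γ₁/(λ₁ ln 2))) − (μ+ν)). -/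
/-!
The objective has derivative `t₂` on `(-ν, ∞)`, so the integral formula is the fundamental theorem
of calculus. Since `1/(ν+s) - 1/(μ+s) = (μ-ν)/((ν+s)(μ+s))` and the denominator increases in `s`,
`t₂` is antitone, which gives concavity. The root `s₂` of `t₂` solves the quadratic
`(ν+s)(μ+s) = γ₁(μ-ν)/(2λ₁ ln 2)`, so `F` increases on `[0, max s₂ 0]` and decreases afterwards.
-/

open Real Set

lemma hasDerivAt_log_one_add_div {ν x : ℝ} (hν : ν ≠ 0) (hx : ν + x ≠ 0) :
    HasDerivAt (fun b => log (1 + b / ν)) (1 / (ν + x)) x := by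
  have h : 1 + x / ν ≠ 0 := by rw [one_add_div hν]; exact div_ne_zero hx hν
  convert (((hasDerivAt_id' x).div_const ν).const_add 1).log h using 1
  field_simp

lemma AntitoneOn.concaveOn_of_hasDerivAt {D : Set ℝ} (hD : Convex ℝ D) (hDo : IsOpen D)
    {f f' : ℝ → ℝ} (hf : ∀ x ∈ D, HasDerivAt f (f' x) x) (hf' : AntitoneOn f' D) :
    ConcaveOn ℝ D f := by
  refine AntitoneOn.concaveOn_of_deriv hD (fun x hx => (hf x hx).continuousAt.continuousWithinAt)
    (fun x hx => (hf x (interior_subset hx)).differentiableAt.differentiableWithinAt) ?_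
  rw [hDo.interior_eq]
  exact hf'.congr fun x hx => ((hf x hx).deriv).symm

theorem isMaxOn_Ici_of_hasDerivAt {f f' : ℝ → ℝ} {a c : ℝ} (hac : a ≤ c)
    (hf : ∀ x ∈ Ici a, HasDerivAt f (f' x) x) (h_nonneg : ∀ x ∈ Ioo a c, 0 ≤ f' x)
    (h_nonpos : ∀ x ∈ Ioi c, f' x ≤ 0) : IsMaxOn f (Ici a) c := by
  have hcont : ContinuousOn f (Ici a) := fun x hx => (hf x hx).continuousAt.continuousWithinAt
  intro b (hb : a ≤ b)
  rcases le_total b c with hbc | hcb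
  · have hmono : MonotoneOn f (Icc a c) :=
      monotoneOn_of_hasDerivWithinAt_nonneg (convex_Icc a c) (hcont.mono Icc_subset_Ici_self)
        (fun x hx => (hf x (Icc_subset_Ici_self (interior_subset hx))).hasDerivWithinAt)
        (fun x hx => h_nonneg x (by rwa [interior_Icc] at hx))
    exact hmono ⟨hb, hbc⟩ ⟨hac, le_rfl⟩ hbc
  · have hanti : AntitoneOn f (Ici c) :=
      antitoneOn_of_hasDerivWithinAt_nonpos (convex_Ici c) (hcont.mono (Ici_subset_Ici.2 hac))
        (fun x hx => (hf x (Ici_subset_Ici.2 hac (interior_subset hx))).hasDerivWithinAt)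
        (fun x hx => h_nonpos x (by rwa [interior_Ici] at hx))
    exact hanti self_mem_Ici hcb hcb

noncomputable section

namespace Wiretap

variable (ν μ γ l : ℝ)

def objective (b : ℝ) : ℝ :=
  γ / 2 * logb 2 (1 + b / ν) - γ / 2 * logb 2 (1 + b / μ) - l * b

def marginal (s : ℝ) : ℝ :=
  γ / (2 * log 2) * (1 / (ν + s) - 1 / (μ + s)) - l

def optimum : ℝ :=
  1 / 2 * (√((μ - ν) * (μ - ν + 2 * γ / (l * log 2))) - (μ + ν))

variable {ν μ γ l}

theorem hasDerivAt_objective (hν : ν ≠ 0) (hμ : μ ≠ 0) {x : ℝ} (hνx : ν + x ≠ 0)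
    (hμx : μ + x ≠ 0) : HasDerivAt (objective ν μ γ l) (marginal ν μ γ l x) x := by
  have h := ((((hasDerivAt_log_one_add_div hν hνx).sub
    (hasDerivAt_log_one_add_div hμ hμx)).div_const (log 2)).const_mul (γ / 2)).sub
    ((hasDerivAt_id' x).const_mul l)
  have hobj : objective ν μ γ l =
      fun b => γ / 2 * ((log (1 + b / ν) - log (1 + b / μ)) / log 2) - l * b := by
    funext b
    simp only [objective, logb]
    ring
  rw [hobj]
  exact h.congr_deriv (by simp only [marginal]; ring)

theorem marginal_eq {s : ℝ} (hνs : ν + s ≠ 0) (hμs : μ + s ≠ 0) :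
    marginal ν μ γ l s = γ * (μ - ν) / (2 * log 2 * ((ν + s) * (μ + s))) - l := by
  simp only [marginal]
  field_simp
  ring

theorem antitoneOn_marginal (hμ : ν ≤ μ) (hγ : 0 ≤ γ) :
    AntitoneOn (marginal ν μ γ l) (Ioi (-ν)) := by
  intro x (hx : -ν < x) y (hy : -ν < y) hxy
  rw [marginal_eq (by linarith) (by linarith), marginal_eq (by linarith) (by linarith),
    sub_le_sub_iff_right]
  have hνx : 0 < ν + x := by linarith
  have hμx : 0 < μ + x := by linarith
  gcongr
  linarith

theorem neg_lt_optimum (hμ : ν < μ) (hγ : 0 < γ) (hl : 0 < l) : -ν < optimum ν μ γ l := by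
  have hc : 0 < 2 * γ / (l * log 2) := by positivity
  have : μ - ν < √((μ - ν) * (μ - ν + 2 * γ / (l * log 2))) := by
    rw [lt_sqrt (by linarith)]
    nlinarith
  simp only [optimum]
  linarith

theorem marginal_optimum (hμ : ν < μ) (hγ : 0 < γ) (hl : 0 < l) :
    marginal ν μ γ l (optimum ν μ γ l) = 0 := by
  have hopt := neg_lt_optimum hμ hγ hl
  have hprod : (ν + optimum ν μ γ l) * (μ + optimum ν μ γ l) = (μ - ν) * γ / (2 * l * log 2) := by
    have hsq := sq_sqrt (show 0 ≤ (μ - ν) * (μ - ν + 2 * γ / (l * log 2)) by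
      have : 0 < μ - ν := sub_pos.2 hμ
      positivity)
    calc (ν + optimum ν μ γ l) * (μ + optimum ν μ γ l)
        = (√((μ - ν) * (μ - ν + 2 * γ / (l * log 2))) ^ 2 - (μ - ν) ^ 2) / 4 := by
          simp only [optimum]; ring
      _ = (μ - ν) * γ / (2 * l * log 2) := by
          rw [hsq]; field_simp; ring
  have hμν : μ - ν ≠ 0 := sub_ne_zero.2 hμ.ne'
  rw [marginal_eq (by linarith) (by linarith), hprod]
  field_simp
  ring

theorem hasDerivAt_objective_of_mem_Ioi (hν : 0 < ν) (hμ : ν ≤ μ) {x : ℝ} (hx : x ∈ Ioi (-ν)) :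
    HasDerivAt (objective ν μ γ l) (marginal ν μ γ l x) x := by
  have hx : -ν < x := hx
  exact hasDerivAt_objective hν.ne' (by linarith) (by linarith) (by linarith)

theorem integral_marginal (hν : 0 < ν) (hμ : ν ≤ μ) (hγ : 0 ≤ γ) {a b : ℝ} (ha : -ν < a)
    (hb : -ν < b) :
    ∫ s in a..b, marginal ν μ γ l s = objective ν μ γ l b - objective ν μ γ l a := by
  have hab : uIcc a b ⊆ Ioi (-ν) := ordConnected_Ioi.uIcc_subset ha hb
  exact intervalIntegral.integral_eq_sub_of_hasDerivAt
    (fun x hx => hasDerivAt_objective_of_mem_Ioi hν hμ (hab hx))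
    ((antitoneOn_marginal hμ hγ).mono hab).intervalIntegrable

theorem marginal_nonneg (hμ : ν < μ) (hγ : 0 < γ) (hl : 0 < l) {s : ℝ} (hs : -ν < s)
    (hs' : s ≤ optimum ν μ γ l) : 0 ≤ marginal ν μ γ l s :=
  marginal_optimum hμ hγ hl ▸
    antitoneOn_marginal hμ.le hγ.le hs (neg_lt_optimum hμ hγ hl) hs'

theorem marginal_nonpos (hμ : ν < μ) (hγ : 0 < γ) (hl : 0 < l) {s : ℝ}
    (hs : optimum ν μ γ l ≤ s) : marginal ν μ γ l s ≤ 0 :=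
  have hopt := neg_lt_optimum hμ hγ hl
  marginal_optimum hμ hγ hl ▸ antitoneOn_marginal hμ.le hγ.le hopt (hopt.trans_le hs) hs

end Wiretap

end

open Wiretap

/-- The confidential-power objective `F` has integral representation
`F(b) = ∫₀^b t₂`, is concave on `[0,∞)`, and is maximized at `b* = max(s₂,0)`. -/
theorem stmt_17 (ν μ γ1 l1 : ℝ) (hν : 0 < ν) (hμ : ν < μ) (hγ : 0 < γ1)
    (hl1 : 0 < l1) (F t2 : ℝ → ℝ)
    (hF : ∀ b, F b = (γ1 / 2) * Real.logb 2 (1 + b / ν)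
        - (γ1 / 2) * Real.logb 2 (1 + b / μ) - l1 * b)
    (ht2 : ∀ s, t2 s = γ1 / (2 * Real.log 2) * (1 / (ν + s) - 1 / (μ + s)) - l1)
    (s2 : ℝ)
    (hs2 : s2 = (1 / 2) * (Real.sqrt ((μ - ν) * (μ - ν + 2 * γ1 / (l1 * Real.log 2)))
        - (μ + ν))) :
    (∀ b : ℝ, 0 ≤ b → F b = ∫ s in (0 : ℝ)..b, t2 s) ∧
    ConcaveOn ℝ (Set.Ici 0) F ∧
    (∀ b : ℝ, 0 ≤ b → F b ≤ F (max s2 0)) := by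
  obtain rfl : F = objective ν μ γ1 l1 := funext hF
  obtain rfl : t2 = marginal ν μ γ1 l1 := funext ht2
  obtain rfl : s2 = optimum ν μ γ1 l1 := hs2
  have hIci : Ici (0 : ℝ) ⊆ Ioi (-ν) := Ici_subset_Ioi.2 (neg_lt_zero.2 hν)
  refine ⟨fun b hb => ?_, ?_, fun b hb => ?_⟩
  · rw [integral_marginal hν hμ.le hγ.le (hIci self_mem_Ici) (hIci hb)]
    simp [objective]
  · have hconcave := (antitoneOn_marginal hμ.le hγ.le).concaveOn_of_hasDerivAt (convex_Ioi _)
      isOpen_Ioi fun x => hasDerivAt_objective_of_mem_Ioi (γ := γ1) (l := l1) hν hμ.le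
    exact hconcave.subset hIci (convex_Ici 0)
  · refine isMaxOn_Ici_of_hasDerivAt (le_max_right _ _)
      (fun x hx => hasDerivAt_objective_of_mem_Ioi hν hμ.le (hIci hx)) (fun x hx => ?_)
      (fun x hx => marginal_nonpos hμ hγ hl1 (le_max_left _ _ |>.trans hx.le)) hb
    have hx_lt : x < optimum ν μ γ1 l1 := (lt_max_iff.1 hx.2).resolve_right hx.1.not_gt
    exact marginal_nonneg hμ hγ hl1 (hIci hx.1.le) hx_lt.le
end
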